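/- arXiv:1110.3523 — 3 statements merged into one kernel-verified Lean document; each statement's English description precedes it below -/
import Mathlib

section
/- Let k be a field of characteristic zero and let Φ be an irreducible root system in a finite-dimensional k-vector space M with dim M ≥ 2. Then for every root β ∈ Φ, the set of roots Φ \ {β, −β} spans M. -/
/-!
Every reflection `s_i` preserves the span of the roots other than `±β`: if `α_i ≠ ±β` then
`s_i α = α - ⟨α, α_i^∨⟩ α_i` is a combination of such roots, and if `α_i = ±β` then `s_i` is a
permutation of the roots swapping `β` and `-β`, hence preserving the remaining ones. This span is
nonzero, since otherwise all roots would lie on the line through `β`. Irreducibility finishes.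
-/

/-- A root pairing is irreducible if the weight space is nonzero and has no proper nonzero
submodule that is invariant under all the reflections associated to roots. -/
def RootPairing.IsIrred {ι R M N : Type*} [CommRing R] [AddCommGroup M] [Module R M]
    [AddCommGroup N] [Module R N] (P : RootPairing ι R M N) : Prop :=
  Nontrivial M ∧ ∀ q : Submodule R M,
    (∀ i : ι, q.map (P.reflection i : M →ₗ[R] M) ≤ q) → q ≠ ⊥ → q = ⊤

/-- A root system is a root pairing whose roots span the weight space (the definition of
`RootSystem` in the older Mathlib, which has since been removed). -/
structure RootSystem (ι R M N : Type*) [CommRing R] [AddCommGroup M] [Module R M]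
    [AddCommGroup N] [Module R N] extends RootPairing ι R M N where
  span_eq_top : Submodule.span R (Set.range root) = ⊤

open Set Submodule

namespace RootPairing

variable {ι R M N : Type*} [CommRing R] [AddCommGroup M] [Module R M] [AddCommGroup N]
  [Module R N] (P : RootPairing ι R M N)

def rootsAwayFrom (b : ι) : Set M :=
  {α : M | α ∈ range P.root ∧ α ≠ P.root b ∧ α ≠ -P.root b}

variable {P} {i b : ι}

lemma reflection_apply_root_eq_neg (h : P.root i = P.root b ∨ P.root i = -P.root b) :
    P.reflection i (P.root b) = -P.root b := by
  rcases h with h | h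
  · rw [← h, reflection_apply_self]
  · rw [neg_eq_iff_eq_neg.mp h.symm, map_neg, reflection_apply_self, neg_neg, h]

lemma mapsTo_reflection_rootsAwayFrom (h : P.root i = P.root b ∨ P.root i = -P.root b) :
    MapsTo (P.reflection i) (P.rootsAwayFrom b) (P.rootsAwayFrom b) := by
  rintro α ⟨hα, hαb, hαb'⟩
  have hb := reflection_apply_root_eq_neg h
  refine ⟨P.mapsTo_reflection_root i hα, fun hs ↦ hαb' ?_, fun hs ↦ hαb ?_⟩
  · rw [← P.reflection_same i α, hs, hb]
  · rw [← P.reflection_same i α, hs, map_neg, hb, neg_neg]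

lemma reflection_mem_span_rootsAwayFrom {α : M} (hα : α ∈ P.rootsAwayFrom b) :
    P.reflection i α ∈ span R (P.rootsAwayFrom b) := by
  by_cases h : P.root i = P.root b ∨ P.root i = -P.root b
  · exact subset_span (mapsTo_reflection_rootsAwayFrom h hα)
  · push Not at h
    rw [reflection_apply]
    exact sub_mem (subset_span hα) (smul_mem _ _ (subset_span ⟨mem_range_self i, h⟩))

lemma map_reflection_span_rootsAwayFrom_le :
    (span R (P.rootsAwayFrom b)).map (P.reflection i : M →ₗ[R] M) ≤
      span R (P.rootsAwayFrom b) := by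
  rw [map_span, span_le]
  rintro - ⟨α, hα, rfl⟩
  exact reflection_mem_span_rootsAwayFrom hα

variable (P b) in
lemma span_root_le_span_rootsAwayFrom_sup :
    span R (range P.root) ≤ span R (P.rootsAwayFrom b) ⊔ R ∙ P.root b := by
  rw [span_le]
  rintro - ⟨j, rfl⟩
  by_cases h : P.root j ∈ P.rootsAwayFrom b
  · exact mem_sup_left (subset_span h)
  · obtain h | h : P.root j = P.root b ∨ P.root j = -P.root b := by
      simpa only [rootsAwayFrom, mem_ofPred_eq, mem_range_self, true_and, not_and_or,
        not_not] using h
    · exact mem_sup_right (h ▸ mem_span_singleton_self _)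
    · exact mem_sup_right (h ▸ neg_mem (mem_span_singleton_self _))

end RootPairing

theorem span_roots_erase_pair_eq_top_general {ι k M N : Type*} [Field k]
    [AddCommGroup M] [Module k M] [AddCommGroup N] [Module k N]
    (P : RootSystem ι k M N) (hirr : P.toRootPairing.IsIrred)
    (hdim : 2 ≤ Module.finrank k M) (b : ι) :
    Submodule.span k {α : M | α ∈ Set.range P.root ∧ α ≠ P.root b ∧ α ≠ -P.root b} = ⊤ := by
  refine hirr.2 _ (fun _ ↦ RootPairing.map_reflection_span_rootsAwayFrom_le) fun hbot ↦ ?_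
  have hline : ⊤ ≤ k ∙ P.root b := by
    have := P.span_root_le_span_rootsAwayFrom_sup b
    rwa [P.span_eq_top, RootPairing.rootsAwayFrom, hbot, bot_sup_eq] at this
  have : Module.finrank k M ≤ 1 :=
    finrank_le_one (P.root b) fun w ↦ mem_span_singleton.mp (hline trivial)
  omega

/-- For an irreducible root system in a space of dimension at least `2` over a field of
characteristic zero, removing a pair of roots `±β` still leaves a spanning set of roots. -/
theorem span_roots_erase_pair_eq_top {ι k M N : Type*} [Field k] [CharZero k]
    [AddCommGroup M] [Module k M] [AddCommGroup N] [Module k N] [FiniteDimensional k M]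
    (P : RootSystem ι k M N) (hirr : P.toRootPairing.IsIrred)
    (hdim : 2 ≤ Module.finrank k M) (b : ι) :
    Submodule.span k {α : M | α ∈ Set.range P.root ∧ α ≠ P.root b ∧ α ≠ -P.root b} = ⊤ :=
  span_roots_erase_pair_eq_top_general P hirr hdim b
end

section
/- Let k be a field of characteristic zero and let Φ be an irreducible root system in a finite-dimensional k-vector space M with dim M ≥ 2, with coweight space N and perfect pairing ⟨·,·⟩ : M × N → k. Fix a root β ∈ Φ. If x ∈ N satisfies ⟨α, x⟩ = 0 for every root α ∈ Φ with α ≠ β and α ≠ −β, then x = 0. -/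
/-!
For a submodule `L` of `M`, the span of the roots outside `L` is stable under every reflection:
reflecting in a root outside `L` stays in the span, while reflecting in a root `α ∈ L` sends a
root `γ ∉ L` to the root `γ - ⟨γ, α^∨⟩ α`, again outside `L`. So for an irreducible root pairing
the roots outside `L` span `M` as soon as there is one. Applied to `L = k ∙ β`, which misses some
root when `dim M ≥ 2`, the functional `⟨·, x⟩` vanishes on a spanning set, so `x = 0` by
perfectness of the pairing.
-/

open Set Submodule

namespace RootPairing

variable {ι R M N : Type*} [CommRing R] [AddCommGroup M] [Module R M]
  [AddCommGroup N] [Module R N] (P : RootPairing ι R M N)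

lemma map_reflection_span_root_diff_le (L : Submodule R M) (i : ι) :
    (span R (range P.root \ L)).map (P.reflection i : M →ₗ[R] M) ≤ span R (range P.root \ L) := by
  rw [map_span, span_le]
  rintro - ⟨-, ⟨⟨j, rfl⟩, hj⟩, rfl⟩
  by_cases hi : P.root i ∈ L
  · refine subset_span ⟨⟨P.reflectionPerm i j, P.root_reflectionPerm i j⟩, fun h ↦ hj ?_⟩
    simpa [reflection_apply_root] using L.add_mem h (L.smul_mem (P.pairing j i) hi)
  · simp only [LinearEquiv.coe_coe, reflection_apply_root]
    exact sub_mem (subset_span ⟨⟨j, rfl⟩, hj⟩) (smul_mem _ _ (subset_span ⟨⟨i, rfl⟩, hi⟩))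

variable {P} in
lemma IsIrred.span_root_diff_eq_top (hP : P.IsIrred) {L : Submodule R M} {i : ι}
    (hi : P.root i ∉ L) : span R (range P.root \ L) = ⊤ :=
  hP.2 _ (P.map_reflection_span_root_diff_le L) fun h ↦ hi <| by
    rw [(Submodule.eq_bot_iff _).1 h (P.root i) (subset_span ⟨⟨i, rfl⟩, hi⟩)]
    exact L.zero_mem

end RootPairing

lemma RootSystem.exists_root_notMem_span_singleton {ι K M N : Type*} [Field K] [AddCommGroup M]
    [Module K M] [AddCommGroup N] [Module K N] (P : RootSystem ι K M N)
    (hdim : 2 ≤ Module.finrank K M) (v : M) : ∃ i, P.root i ∉ K ∙ v := by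
  by_contra! h
  have hline : K ∙ v = ⊤ := top_le_iff.1 (P.span_eq_top ▸ span_le.2 (range_subset_iff.2 h))
  have := finrank_span_le_card (R := K) ({v} : Set M)
  rw [hline, finrank_top, toFinset_singleton, Finset.card_singleton] at this
  omega

theorem eq_zero_of_forall_root_ne_pair_apply_eq_zero_general {ι k M N : Type*} [Field k]
    [AddCommGroup M] [Module k M] [AddCommGroup N] [Module k N]
    (P : RootSystem ι k M N) (hirr : P.toRootPairing.IsIrred)
    (hdim : 2 ≤ Module.finrank k M) (b : ι) (x : N)
    (hx : ∀ i : ι, P.root i ≠ P.root b → P.root i ≠ -P.root b →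
      P.toLinearMap (P.root i) x = 0) :
    x = 0 := by
  obtain ⟨i, hi⟩ := P.exists_root_notMem_span_singleton hdim (P.root b)
  have hker : span k (range P.root \ (k ∙ P.root b)) ≤ LinearMap.ker (P.toLinearMap.flip x) := by
    refine span_le.2 ?_
    rintro - ⟨⟨j, rfl⟩, hj⟩
    exact hx j (fun h ↦ hj (h ▸ mem_span_singleton_self _))
      (fun h ↦ hj (h ▸ neg_mem (mem_span_singleton_self _)))
  rw [hirr.span_root_diff_eq_top hi, top_le_iff, LinearMap.ker_eq_top] at hker
  exact (LinearMap.IsPerfPair.bijective_right P.toLinearMap).injective (by simpa using hker)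

/-- In an irreducible root system of rank at least `2` over a field of characteristic zero, an
element of the coweight space on which all roots except possibly the pair `±β` vanish is zero. -/
theorem eq_zero_of_forall_root_ne_pair_apply_eq_zero {ι k M N : Type*} [Field k] [CharZero k]
    [AddCommGroup M] [Module k M] [AddCommGroup N] [Module k N] [FiniteDimensional k M]
    (P : RootSystem ι k M N) (hirr : P.toRootPairing.IsIrred)
    (hdim : 2 ≤ Module.finrank k M) (b : ι) (x : N)
    (hx : ∀ i : ι, P.root i ≠ P.root b → P.root i ≠ -P.root b →
      P.toLinearMap (P.root i) x = 0) :
    x = 0 :=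
  eq_zero_of_forall_root_ne_pair_apply_eq_zero_general P hirr hdim b x hx
end

section
/- Let k be a commutative ring, R a commutative k-algebra, and S a commutative R-algebra (with compatible k-algebra structure) such that S is formally étale over R. Then for every k-derivation D : R → S (where S is an R-module via the algebra map), there exists a unique k-derivation D' : S → S such that D'(algebraMap R S r) = D(r) for all r ∈ R. -/
/-!
By the Jacobi–Zariski sequence `H₁(L_{S/R}) → S ⊗[R] Ω[R⁄k] → Ω[S⁄k] → Ω[S⁄R] → 0`, whose outer
terms vanish when `S` is formally étale over `R`, the base change map `S ⊗[R] Ω[R⁄k] → Ω[S⁄k]` is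
an isomorphism. Since `k`-derivations into a module are the linear maps out of the Kähler
differentials, restricting derivations along `R → S` is then a bijection.
-/

universe u

open KaehlerDifferential

section

variable {k R S : Type*} [CommRing k] [CommRing R] [CommRing S]
  [Algebra k R] [Algebra k S] [Algebra R S] [IsScalarTower k R S]

theorem KaehlerDifferential.mapBaseChange_bijective_of_formallyEtale
    [Algebra.FormallyEtale R S] : Function.Bijective (mapBaseChange k R S) := by
  refine ⟨(injective_iff_map_eq_zero _).2 fun x hx ↦ ?_, fun x ↦ ?_⟩
  · obtain ⟨y, rfl⟩ := (Algebra.H1Cotangent.exact_δ_mapBaseChange k R S x).1 hx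
    rw [Subsingleton.elim y 0, map_zero]
  · exact (exact_mapBaseChange_map k R S x).1 (Subsingleton.elim _ _)

variable (M : Type*) [AddCommGroup M] [Module S M] [Module R M] [Module k M]
  [IsScalarTower R S M] [IsScalarTower k S M] [IsScalarTower k R M]

theorem Derivation.compAlgebraMap_bijective_of_formallyEtale [Algebra.FormallyEtale R S] :
    Function.Bijective (Derivation.compAlgebraMap R : Derivation k S M → Derivation k R M) := by
  let e := LinearEquiv.ofBijective _ (mapBaseChange_bijective_of_formallyEtale (k := k) (R := R)
    (S := S))
  let E : Derivation k S M ≃ Derivation k R M :=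
    (linearMapEquivDerivation k S).symm.toEquiv.trans <|
      (e.arrowCongr (LinearEquiv.refl S M)).symm.toEquiv.trans <|
        (LinearMap.liftBaseChangeEquiv S).symm.toEquiv.trans (linearMapEquivDerivation k R).toEquiv
  convert E.bijective
  ext D r
  simp [E, e]

end

/-- Derivations extend uniquely along formally étale algebras: if `S` is formally étale over `R`,
then every `k`-derivation `R → S` extends uniquely to a `k`-derivation `S → S`. -/
theorem existsUnique_derivation_extension_of_formallyEtale
    {k : Type*} {R S : Type u} [CommRing k] [CommRing R] [CommRing S]
    [Algebra k R] [Algebra k S] [Algebra R S] [IsScalarTower k R S]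
    [Algebra.FormallyEtale R S] (D : Derivation k R S) :
    ∃! D' : Derivation k S S, ∀ r : R, D' (algebraMap R S r) = D r := by
  refine (existsUnique_congr fun D' ↦ ?_).1
    ((Derivation.compAlgebraMap_bijective_of_formallyEtale (k := k) (R := R) S).existsUnique D)
  exact Derivation.ext_iff
end
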